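/- arXiv:2012.14748 — 2 statements merged into one kernel-verified Lean document; each statement's English description precedes it below -/
import Mathlib

section
/- Let A, B be Hermitian m×m complex matrices, let X be any m×m complex matrix, let L ≥ 0, and let f : ℝ → ℝ satisfy |f(λ) − f(μ)| ≤ L·|λ − μ| for every eigenvalue λ of A and every eigenvalue μ of B. Then ‖f(A)·X − X·f(B)‖_F ≤ L·‖A·X − X·B‖_F, where f(A) and f(B) are defined by applying f to the eigenvalues in spectral decompositions of A and B (the functional calculus for Hermitian matrices). -/
/-!
Diagonalise `A = U D U*` and `B = V E V*` and put `Y = U* X V`. Conjugation by unitaries preserves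
the Frobenius norm, and in these bases both commutators act entrywise on `Y`:
`‖f(A)X − Xf(B)‖_F² = ∑ᵢⱼ (f(λᵢ) − f(μⱼ))² |Yᵢⱼ|²` and `‖AX − XB‖_F² = ∑ᵢⱼ (λᵢ − μⱼ)² |Yᵢⱼ|²`,
so the estimate holds term by term.
-/

open Matrix

/-- The squared Frobenius (Hilbert–Schmidt) norm of a complex matrix,
`‖X‖_F² = Re (Tr (Xᴴ X))`. -/
noncomputable def frobeniusNormSq {m : ℕ} (X : Matrix (Fin m) (Fin m) ℂ) : ℝ :=
  (Matrix.trace (Xᴴ * X)).re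

theorem mul_mul_star_sub_mul_mul_star {R : Type*} [Ring R] [StarMul R] (u v : unitary R)
    (a b x : R) :
    (u : R) * a * star (u : R) * x - x * ((v : R) * b * star (v : R)) =
      u * (a * (star (u : R) * x * v) - star (u : R) * x * v * b) * star (v : R) := by
  rw [mul_sub, sub_mul]
  congr 1
  · simp [mul_assoc]
  · simp [← mul_assoc]

theorem diagonal_mul_sub_mul_diagonal_apply {n α : Type*} [Fintype n] [DecidableEq n]
    [CommRing α] (d e : n → α) (Y : Matrix n n α) (i j : n) :
    (diagonal d * Y - Y * diagonal e) i j = (d i - e j) * Y i j := by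
  rw [Matrix.sub_apply, diagonal_mul, mul_diagonal, sub_mul, mul_comm (Y i j)]

section Frobenius

variable {m : ℕ}

theorem frobeniusNormSq_eq_sum (M : Matrix (Fin m) (Fin m) ℂ) :
    frobeniusNormSq M = ∑ i, ∑ j, Complex.normSq (M i j) := by
  simp only [frobeniusNormSq, trace, diag_apply, mul_apply, conjTranspose_apply, Complex.re_sum]
  rw [Finset.sum_comm]
  simp [Complex.normSq_apply, Complex.mul_re]

theorem frobeniusNormSq_unitary_mul_mul_star (U V : unitaryGroup (Fin m) ℂ)
    (M : Matrix (Fin m) (Fin m) ℂ) :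
    frobeniusNormSq ((U : Matrix (Fin m) (Fin m) ℂ) * M * star (V : Matrix (Fin m) (Fin m) ℂ)) =
      frobeniusNormSq M := by
  simp only [frobeniusNormSq, ← star_eq_conjTranspose, star_mul, star_star, mul_assoc]
  rw [trace_mul_comm, ← mul_assoc (star (U : Matrix (Fin m) (Fin m) ℂ)),
    Unitary.coe_star_mul_self, one_mul]
  simp [mul_assoc]

theorem frobeniusNormSq_diagonal_mul_sub_mul_diagonal (d e : Fin m → ℝ)
    (Y : Matrix (Fin m) (Fin m) ℂ) :
    frobeniusNormSq (diagonal (RCLike.ofReal ∘ d) * Y - Y * diagonal (RCLike.ofReal ∘ e)) =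
      ∑ i, ∑ j, (d i - e j) ^ 2 * Complex.normSq (Y i j) := by
  simp only [frobeniusNormSq_eq_sum, diagonal_mul_sub_mul_diagonal_apply, Function.comp_apply,
    RCLike.ofReal_eq_complex_ofReal, ← Complex.ofReal_sub, Complex.normSq_mul,
    Complex.normSq_ofReal, sq]

theorem frobeniusNormSq_conj_diagonal_mul_sub_mul_conj_diagonal
    (U V : unitaryGroup (Fin m) ℂ) (d e : Fin m → ℝ) (X : Matrix (Fin m) (Fin m) ℂ) :
    frobeniusNormSq (Unitary.conjStarAlgAut ℂ _ U (diagonal (RCLike.ofReal ∘ d)) * X -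
        X * Unitary.conjStarAlgAut ℂ _ V (diagonal (RCLike.ofReal ∘ e))) =
      ∑ i, ∑ j, (d i - e j) ^ 2 *
        Complex.normSq ((star (U : Matrix (Fin m) (Fin m) ℂ) * X * V) i j) := by
  rw [Unitary.conjStarAlgAut_apply, Unitary.conjStarAlgAut_apply, mul_mul_star_sub_mul_mul_star,
    frobeniusNormSq_unitary_mul_mul_star, frobeniusNormSq_diagonal_mul_sub_mul_diagonal]

end Frobenius

theorem sqrt_sum_sum_sq_mul_le {ι κ : Type*} [Fintype ι] [Fintype κ] {a b w : ι → κ → ℝ}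
    {L : ℝ} (hL : 0 ≤ L) (hw : ∀ i j, 0 ≤ w i j) (hab : ∀ i j, |a i j| ≤ L * |b i j|) :
    √(∑ i, ∑ j, a i j ^ 2 * w i j) ≤ L * √(∑ i, ∑ j, b i j ^ 2 * w i j) := by
  rw [← Real.sqrt_sq hL, ← Real.sqrt_mul (sq_nonneg L), Finset.mul_sum]
  refine Real.sqrt_le_sqrt (Finset.sum_le_sum fun i _ => ?_)
  rw [Finset.mul_sum]
  refine Finset.sum_le_sum fun j _ => ?_
  rw [← mul_assoc, ← mul_pow, ← sq_abs (a i j), ← sq_abs (_ * b i j), abs_mul, abs_of_nonneg hL]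
  exact mul_le_mul_of_nonneg_right (pow_le_pow_left₀ (abs_nonneg _) (hab i j) 2) (hw i j)

/-- Lipschitz commutator estimate for the functional calculus of Hermitian matrices:
if `|f(λ) − f(μ)| ≤ L|λ − μ|` for all eigenvalues `λ` of `A` and `μ` of `B`, then
`‖f(A)X − Xf(B)‖_F ≤ L‖AX − XB‖_F`. -/
theorem frobenius_norm_cfc_commutator_le
    {m : ℕ} {A B : Matrix (Fin m) (Fin m) ℂ}
    (hA : A.IsHermitian) (hB : B.IsHermitian)
    (X : Matrix (Fin m) (Fin m) ℂ) {L : ℝ} (hL : 0 ≤ L) (f : ℝ → ℝ)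
    (hf : ∀ i j, |f (hA.eigenvalues i) - f (hB.eigenvalues j)| ≤
      L * |hA.eigenvalues i - hB.eigenvalues j|) :
    Real.sqrt (frobeniusNormSq (hA.cfc f * X - X * hB.cfc f)) ≤
      L * Real.sqrt (frobeniusNormSq (A * X - X * B)) := by
  rw [IsHermitian.cfc, IsHermitian.cfc]
  conv_rhs => rw [hA.spectral_theorem, hB.spectral_theorem]
  rw [frobeniusNormSq_conj_diagonal_mul_sub_mul_conj_diagonal,
    frobeniusNormSq_conj_diagonal_mul_sub_mul_conj_diagonal]
  exact sqrt_sum_sum_sq_mul_le hL (fun _ _ => Complex.normSq_nonneg _) hf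
end

section
/- Let F be a finite set of m×m complex matrices closed under conjugate transpose (F = {x* : x ∈ F}), let τ(X) := Tr(X)/m be the normalized trace, let E(a) := Σ_{x∈F} τ((xa−ax)*(xa−ax)) be the associated elementary Dirichlet form, and let ‖a‖₂² := τ(a*a). Suppose there exists ε > 0 such that for every unitary m×m matrix u one has ε·(1 − |τ(u)|²) ≤ E(u). Then for every m×m complex matrix a one has (ε/8)·‖a − τ(a)·1‖₂² ≤ E(a), i.e. the elementary Dirichlet form E satisfies a Poincaré inequality with constant ε/8. -/
/-!
Write `a = b + i c` with `b, c` self-adjoint. Since `F = F*`, the form splits, `E(a) = E(b) + E(c)`,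
and so does the variance `‖a - τ(a)‖₂²`, because `τ` kills the commutator `[b, c]`.

For self-adjoint `b = V diag(λ) V*`, test the hypothesis on `u = V diag(e^{itλ}) V*`. In the
eigenbasis of `b` everything is a weighted sum over pairs of eigenvalues: `E(u)` and `E(b)` carry
the weights `|e^{itλ_j} - e^{itλ_i}|²` and `|λ_j - λ_i|²`, while
`1 - |τ(u)|² = ‖u - τ(u)‖₂² = (2m²)⁻¹ Σ_{k,l} |e^{itλ_k} - e^{itλ_l}|²`. For `t` so small that all
`t|λ_k - λ_l| < π`, chord and arc are comparable,
`(2/π) t |λ_k - λ_l| ≤ |e^{itλ_k} - e^{itλ_l}| ≤ t |λ_k - λ_l|`, so after cancelling `t²` the gap at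
`u` gives `(2/π)² ε ‖b - τ(b)‖₂² ≤ E(b)`; finally `1/8 ≤ (2/π)²`.
-/

open Matrix

/-- The normalized trace `τ(X) = Tr(X)/m` on `m × m` complex matrices. -/
noncomputable def normalizedTrace {m : ℕ} (X : Matrix (Fin m) (Fin m) ℂ) : ℂ :=
  Matrix.trace X / (m : ℂ)

/-- The elementary Dirichlet form `E_F(a) = Σ_{x∈F} τ((xa−ax)*(xa−ax))` associated
to a finite set `F` of matrices (value taken as a real number). -/
noncomputable def elementaryDirichletForm {m : ℕ}
    (F : Finset (Matrix (Fin m) (Fin m) ℂ)) (a : Matrix (Fin m) (Fin m) ℂ) : ℝ :=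
  ∑ x ∈ F, (normalizedTrace ((x * a - a * x)ᴴ * (x * a - a * x))).re


open scoped Real
open Complex (I normSq)

section Trace

variable {n : Type*} [Fintype n]

theorem Matrix.trace_conjTranspose_mul_self_eq_sum_normSq (A : Matrix n n ℂ) :
    (Aᴴ * A).trace = ∑ i, ∑ j, (normSq (A i j) : ℂ) := by
  rw [Finset.sum_comm]
  simp [Matrix.trace, Matrix.mul_apply, Complex.normSq_eq_conj_mul_self]

theorem Matrix.trace_conjStarAlgAut [DecidableEq n] {R : Type*} [CommRing R] [StarRing R]
    (U : unitary (Matrix n n R)) (A : Matrix n n R) :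
    (Unitary.conjStarAlgAut R _ U A).trace = A.trace := by
  rw [Unitary.conjStarAlgAut_apply, Matrix.trace_mul_cycle, Unitary.coe_star_mul_self, one_mul]

end Trace

section NormalizedTrace

variable {m : ℕ}

theorem normalizedTrace_add (A B : Matrix (Fin m) (Fin m) ℂ) :
    normalizedTrace (A + B) = normalizedTrace A + normalizedTrace B := by
  simp [normalizedTrace, Matrix.trace_add, add_div]

theorem normalizedTrace_sub (A B : Matrix (Fin m) (Fin m) ℂ) :
    normalizedTrace (A - B) = normalizedTrace A - normalizedTrace B := by
  simp [normalizedTrace, Matrix.trace_sub, sub_div]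

theorem normalizedTrace_smul (c : ℂ) (A : Matrix (Fin m) (Fin m) ℂ) :
    normalizedTrace (c • A) = c * normalizedTrace A := by
  simp [normalizedTrace, Matrix.trace_smul, mul_div_assoc]

theorem normalizedTrace_one (hm : m ≠ 0) :
    normalizedTrace (1 : Matrix (Fin m) (Fin m) ℂ) = 1 := by
  simp [normalizedTrace, hm]

theorem normalizedTrace_conjTranspose (A : Matrix (Fin m) (Fin m) ℂ) :
    normalizedTrace Aᴴ = star (normalizedTrace A) := by
  simp [normalizedTrace, Matrix.trace_conjTranspose]

theorem normalizedTrace_conjStarAlgAut (U : unitary (Matrix (Fin m) (Fin m) ℂ))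
    (A : Matrix (Fin m) (Fin m) ℂ) :
    normalizedTrace (Unitary.conjStarAlgAut ℂ _ U A) = normalizedTrace A := by
  rw [normalizedTrace, Matrix.trace_conjStarAlgAut, normalizedTrace]

theorem normalizedTrace_diagonal (d : Fin m → ℂ) :
    normalizedTrace (diagonal d) = (∑ k, d k) / m := by
  rw [normalizedTrace, Matrix.trace_diagonal]

theorem IsSelfAdjoint.normalizedTrace {A : Matrix (Fin m) (Fin m) ℂ} (hA : IsSelfAdjoint A) :
    IsSelfAdjoint (normalizedTrace A) := by
  rw [IsSelfAdjoint, ← normalizedTrace_conjTranspose]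
  exact congrArg _ hA

end NormalizedTrace

noncomputable def l2NormSq {m : ℕ} (X : Matrix (Fin m) (Fin m) ℂ) : ℝ :=
  (normalizedTrace (Xᴴ * X)).re

section L2Norm

variable {m : ℕ}

theorem elementaryDirichletForm_eq_sum_l2NormSq (F : Finset (Matrix (Fin m) (Fin m) ℂ))
    (a : Matrix (Fin m) (Fin m) ℂ) :
    elementaryDirichletForm F a = ∑ x ∈ F, l2NormSq (x * a - a * x) :=
  rfl

theorem l2NormSq_eq_sum_normSq (X : Matrix (Fin m) (Fin m) ℂ) :
    l2NormSq X = (∑ i, ∑ j, normSq (X i j)) / m := by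
  rw [l2NormSq, normalizedTrace, Matrix.trace_conjTranspose_mul_self_eq_sum_normSq,
    Complex.div_natCast_re]
  norm_cast

theorem l2NormSq_nonneg (X : Matrix (Fin m) (Fin m) ℂ) : 0 ≤ l2NormSq X := by
  rw [l2NormSq_eq_sum_normSq]
  exact div_nonneg (Finset.sum_nonneg fun _ _ => Finset.sum_nonneg fun _ _ =>
    Complex.normSq_nonneg _) m.cast_nonneg

theorem l2NormSq_neg (X : Matrix (Fin m) (Fin m) ℂ) : l2NormSq (-X) = l2NormSq X := by
  simp [l2NormSq]

theorem l2NormSq_conjTranspose (X : Matrix (Fin m) (Fin m) ℂ) : l2NormSq Xᴴ = l2NormSq X := by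
  rw [l2NormSq, l2NormSq, normalizedTrace, normalizedTrace, conjTranspose_conjTranspose,
    Matrix.trace_mul_comm]

theorem l2NormSq_conjStarAlgAut (U : unitary (Matrix (Fin m) (Fin m) ℂ))
    (X : Matrix (Fin m) (Fin m) ℂ) :
    l2NormSq (Unitary.conjStarAlgAut ℂ _ U X) = l2NormSq X := by
  rw [l2NormSq, ← star_eq_conjTranspose, ← map_star, ← map_mul,
    normalizedTrace_conjStarAlgAut]
  rfl

theorem l2NormSq_smul (c : ℂ) (X : Matrix (Fin m) (Fin m) ℂ) :
    l2NormSq (c • X) = normSq c * l2NormSq X := by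
  have h : (c • X)ᴴ * (c • X) = (normSq c : ℂ) • (Xᴴ * X) := by
    rw [conjTranspose_smul, smul_mul_smul_comm, Complex.normSq_eq_conj_mul_self]
    rfl
  rw [l2NormSq, h, normalizedTrace_smul, Complex.re_ofReal_mul, l2NormSq]

theorem l2NormSq_add_add_l2NormSq_sub (X Y : Matrix (Fin m) (Fin m) ℂ) :
    l2NormSq (X + Y) + l2NormSq (X - Y) = 2 * l2NormSq X + 2 * l2NormSq Y := by
  have h : (X + Y)ᴴ * (X + Y) + (X - Y)ᴴ * (X - Y) = (2 : ℂ) • (Xᴴ * X + Yᴴ * Y) := by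
    simp only [conjTranspose_add, conjTranspose_sub, two_smul]
    noncomm_ring
  rw [l2NormSq, l2NormSq, ← Complex.add_re, ← normalizedTrace_add, h, normalizedTrace_smul,
    normalizedTrace_add]
  simp only [Complex.mul_re, Complex.re_ofNat, Complex.im_ofNat, zero_mul, sub_zero,
    Complex.add_re, mul_add]
  rfl

theorem l2NormSq_add_I_smul {P Q : Matrix (Fin m) (Fin m) ℂ} (hP : IsSelfAdjoint P)
    (hQ : IsSelfAdjoint Q) : l2NormSq (P + I • Q) = l2NormSq P + l2NormSq Q := by
  have h : (P + I • Q)ᴴ * (P + I • Q) = Pᴴ * P + Qᴴ * Q + I • (P * Q - Q * P) := by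
    rw [conjTranspose_add, conjTranspose_smul, Complex.star_def, Complex.conj_I,
      ← star_eq_conjTranspose, ← star_eq_conjTranspose, hP.star_eq, hQ.star_eq]
    simp only [add_mul, mul_add, smul_mul_assoc, mul_smul_comm]
    match_scalars <;> simp [Complex.I_mul_I]
  have hcomm : normalizedTrace (P * Q - Q * P) = 0 := by
    rw [normalizedTrace, Matrix.trace_sub, Matrix.trace_mul_comm, sub_self, zero_div]
  rw [l2NormSq, h, normalizedTrace_add, normalizedTrace_add, normalizedTrace_smul, hcomm,
    mul_zero, add_zero, Complex.add_re]
  rfl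

theorem l2NormSq_sub_normalizedTrace_smul_one (hm : m ≠ 0) (a : Matrix (Fin m) (Fin m) ℂ) :
    l2NormSq (a - normalizedTrace a • 1) = l2NormSq a - ‖normalizedTrace a‖ ^ 2 := by
  set c := normalizedTrace a
  have h : (a - c • 1)ᴴ * (a - c • 1) = aᴴ * a - c • aᴴ - star c • a + (star c * c) • 1 := by
    simp only [conjTranspose_sub, conjTranspose_smul, conjTranspose_one,
      sub_mul, mul_sub, smul_mul_assoc, mul_smul_comm, one_mul, mul_one]
    module
  rw [l2NormSq, h, normalizedTrace_add, normalizedTrace_sub, normalizedTrace_sub,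
    normalizedTrace_smul, normalizedTrace_smul, normalizedTrace_smul, normalizedTrace_one hm,
    normalizedTrace_conjTranspose, mul_one, sub_add_cancel, Complex.star_def, Complex.mul_conj,
    Complex.sub_re, Complex.ofReal_re, Complex.sq_norm]
  rfl

end L2Norm

theorem Matrix.diagonal_mem_unitaryGroup {n : Type*} [Fintype n] [DecidableEq n] {d : n → ℂ}
    (hd : ∀ k, ‖d k‖ = 1) : diagonal d ∈ unitaryGroup n ℂ := by
  have h : (fun k => d k * star (d k)) = 1 := by
    funext k
    rw [Complex.star_def, Complex.mul_conj, ← Complex.sq_norm, hd, one_pow, Complex.ofReal_one,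
      Pi.one_apply]
  rw [Matrix.mem_unitaryGroup_iff, star_eq_conjTranspose, diagonal_conjTranspose,
    diagonal_mul_diagonal]
  exact (congrArg diagonal h).trans diagonal_one

theorem Complex.sum_sum_normSq_sub {ι : Type*} [Fintype ι] (d : ι → ℂ) :
    ∑ k, ∑ l, normSq (d k - d l) =
      2 * (Fintype.card ι * ∑ k, normSq (d k) - normSq (∑ k, d k)) := by
  have h : ∑ k, ∑ l, (d k * (starRingEnd ℂ) (d l)).re = normSq (∑ k, d k) := by
    rw [← Complex.ofReal_re (normSq _), ← Complex.mul_conj, map_sum, Finset.sum_mul_sum,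
      Complex.re_sum]
    simp_rw [Complex.re_sum]
  simp only [Complex.normSq_sub, Finset.sum_sub_distrib, Finset.sum_add_distrib, ← Finset.mul_sum,
    h, Finset.sum_const, Finset.card_univ, nsmul_eq_mul]
  ring

section UnitaryConjugation

variable {m : ℕ}

theorem l2NormSq_of_mem_unitaryGroup (hm : m ≠ 0) {u : Matrix (Fin m) (Fin m) ℂ}
    (hu : u ∈ unitaryGroup (Fin m) ℂ) : l2NormSq u = 1 := by
  rw [l2NormSq, ← star_eq_conjTranspose, Unitary.star_mul_self_of_mem hu,
    normalizedTrace_one hm, Complex.one_re]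

theorem one_sub_sq_norm_normalizedTrace_of_mem_unitaryGroup (hm : m ≠ 0)
    {u : Matrix (Fin m) (Fin m) ℂ} (hu : u ∈ unitaryGroup (Fin m) ℂ) :
    1 - ‖normalizedTrace u‖ ^ 2 = l2NormSq (u - normalizedTrace u • 1) := by
  rw [l2NormSq_sub_normalizedTrace_smul_one hm, l2NormSq_of_mem_unitaryGroup hm hu]

theorem l2NormSq_diagonal (d : Fin m → ℂ) :
    l2NormSq (diagonal d) = (∑ k, normSq (d k)) / m := by
  rw [l2NormSq_eq_sum_normSq]
  congr 1
  refine Finset.sum_congr rfl fun i _ => ?_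
  simp [diagonal_apply, apply_ite normSq]

theorem l2NormSq_commutator_diagonal (y : Matrix (Fin m) (Fin m) ℂ) (d : Fin m → ℂ) :
    l2NormSq (y * diagonal d - diagonal d * y) =
      (∑ i, ∑ j, normSq (y i j) * normSq (d j - d i)) / m := by
  rw [l2NormSq_eq_sum_normSq]
  congr 1
  refine Finset.sum_congr rfl fun i _ => Finset.sum_congr rfl fun j _ => ?_
  rw [Matrix.sub_apply, Matrix.mul_diagonal, diagonal_mul, ← Complex.normSq_mul, mul_sub,
    mul_comm (d i)]

variable (U : unitary (Matrix (Fin m) (Fin m) ℂ))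

theorem l2NormSq_conjStarAlgAut_diagonal_sub_normalizedTrace (hm : m ≠ 0) (d : Fin m → ℂ) :
    l2NormSq (Unitary.conjStarAlgAut ℂ _ U (diagonal d) -
        normalizedTrace (Unitary.conjStarAlgAut ℂ _ U (diagonal d)) • 1) =
      (∑ k, ∑ l, normSq (d k - d l)) / (2 * m ^ 2) := by
  rw [l2NormSq_sub_normalizedTrace_smul_one hm, l2NormSq_conjStarAlgAut,
    normalizedTrace_conjStarAlgAut, l2NormSq_diagonal, normalizedTrace_diagonal,
    Complex.sum_sum_normSq_sub, Complex.sq_norm, Complex.normSq_div, Complex.normSq_natCast,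
    Fintype.card_fin]
  field_simp

theorem l2NormSq_commutator_conjStarAlgAut_diagonal (x : Matrix (Fin m) (Fin m) ℂ)
    (d : Fin m → ℂ) :
    l2NormSq (x * Unitary.conjStarAlgAut ℂ _ U (diagonal d) -
        Unitary.conjStarAlgAut ℂ _ U (diagonal d) * x) =
      (∑ i, ∑ j, normSq (((Unitary.conjStarAlgAut ℂ _ U).symm x) i j) * normSq (d j - d i)) /
        m := by
  set φ := Unitary.conjStarAlgAut ℂ (Matrix (Fin m) (Fin m) ℂ) U
  have h : x * φ (diagonal d) - φ (diagonal d) * x =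
      φ (φ.symm x * diagonal d - diagonal d * φ.symm x) := by
    rw [map_sub, map_mul, map_mul, StarAlgEquiv.apply_symm_apply]
  rw [h, l2NormSq_conjStarAlgAut, l2NormSq_commutator_diagonal]

theorem elementaryDirichletForm_conjStarAlgAut_diagonal_le
    (F : Finset (Matrix (Fin m) (Fin m) ℂ)) {d e : Fin m → ℂ} {c : ℝ}
    (h : ∀ i j, normSq (d j - d i) ≤ c * normSq (e j - e i)) :
    elementaryDirichletForm F (Unitary.conjStarAlgAut ℂ _ U (diagonal d)) ≤
      c * elementaryDirichletForm F (Unitary.conjStarAlgAut ℂ _ U (diagonal e)) := by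
  simp only [elementaryDirichletForm_eq_sum_l2NormSq, l2NormSq_commutator_conjStarAlgAut_diagonal,
    Finset.mul_sum, mul_div_assoc']
  refine Finset.sum_le_sum fun x _ => div_le_div_of_nonneg_right
    (Finset.sum_le_sum fun i _ => Finset.sum_le_sum fun j _ => ?_) m.cast_nonneg
  rw [mul_left_comm]
  exact mul_le_mul_of_nonneg_left (h i j) (Complex.normSq_nonneg _)

end UnitaryConjugation

theorem Complex.norm_exp_mul_I_sub_exp_mul_I_mem_Icc {x y : ℝ} (h : |x - y| < π) :
    ‖exp (x * I) - exp (y * I)‖ ∈ Set.Icc (2 / π * |x - y|) |x - y| := by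
  have hxy := Complex.norm_sub_mem_Icc_angle (norm_exp_ofReal_mul_I x) (norm_exp_ofReal_mul_I y)
  obtain ⟨h₁, h₂⟩ := abs_lt.1 h
  rwa [Complex.angle_exp_exp, (toIocMod_eq_self _).2 ⟨h₁, by linarith⟩] at hxy

theorem exists_pos_forall_mul_abs_le_one {ι : Type*} [Fintype ι] (f : ι → ℝ) :
    ∃ t > 0, ∀ i, t * |f i| ≤ 1 := by
  refine ⟨(1 + ∑ i, |f i|)⁻¹, by positivity, fun i => ?_⟩
  rw [inv_mul_le_iff₀ (by positivity), mul_one]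
  linarith [Finset.single_le_sum (fun j _ => abs_nonneg (f j)) (Finset.mem_univ i)]

section Poincare

variable {m : ℕ} {F : Finset (Matrix (Fin m) (Fin m) ℂ)} {ε : ℝ}

theorem poincare_of_unitary_gap_of_isSelfAdjoint (hm : m ≠ 0) (hε : 0 ≤ ε)
    (hgap : ∀ u ∈ unitaryGroup (Fin m) ℂ,
      ε * (1 - ‖normalizedTrace u‖ ^ 2) ≤ elementaryDirichletForm F u)
    {b : Matrix (Fin m) (Fin m) ℂ} (hb : IsSelfAdjoint b) :
    (2 / π) ^ 2 * ε * l2NormSq (b - normalizedTrace b • 1) ≤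
      elementaryDirichletForm F b := by
  set V := hb.isHermitian.eigenvectorUnitary
  set φ := Unitary.conjStarAlgAut ℂ (Matrix (Fin m) (Fin m) ℂ) V
  set μ := hb.isHermitian.eigenvalues
  have hb_eq : b = φ (diagonal fun k => (μ k : ℂ)) := hb.isHermitian.spectral_theorem
  obtain ⟨t, ht, htμ⟩ := exists_pos_forall_mul_abs_le_one fun p : Fin m × Fin m => μ p.1 - μ p.2
  set d : Fin m → ℂ := fun k => Complex.exp (↑(t * μ k) * I)
  set u := φ (diagonal d)
  have hchord (k l : Fin m) :
      ‖d k - d l‖ ∈ Set.Icc (2 / π * (t * |μ k - μ l|)) (t * |μ k - μ l|) := by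
    have h := Complex.norm_exp_mul_I_sub_exp_mul_I_mem_Icc (x := t * μ k) (y := t * μ l)
      (by rw [← mul_sub, abs_mul, abs_of_pos ht]; linarith [htμ (k, l), Real.pi_gt_three])
    rwa [← mul_sub, abs_mul, abs_of_pos ht] at h
  have hμ (k l : Fin m) : normSq ((μ k : ℂ) - μ l) = |μ k - μ l| ^ 2 := by
    rw [← Complex.ofReal_sub, Complex.normSq_ofReal, sq_abs, sq]
  have hu : u ∈ unitaryGroup (Fin m) ℂ := by
    simp only [u, φ, Unitary.conjStarAlgAut_apply]
    exact mul_mem (mul_mem V.2 (Matrix.diagonal_mem_unitaryGroup fun k =>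
      Complex.norm_exp_ofReal_mul_I _)) (Unitary.star_mem V.2)
  have hvar : (2 / π) ^ 2 * t ^ 2 * l2NormSq (b - normalizedTrace b • 1) ≤
      l2NormSq (u - normalizedTrace u • 1) := by
    rw [hb_eq, l2NormSq_conjStarAlgAut_diagonal_sub_normalizedTrace _ hm,
      l2NormSq_conjStarAlgAut_diagonal_sub_normalizedTrace _ hm, mul_div_assoc', Finset.mul_sum]
    refine div_le_div_of_nonneg_right
      (Finset.sum_le_sum fun k _ => ?_) (by positivity)
    rw [Finset.mul_sum]
    refine Finset.sum_le_sum fun l _ => ?_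
    rw [hμ, ← Complex.sq_norm, ← mul_pow, ← mul_pow]
    exact pow_le_pow_left₀ (by positivity) (by simpa only [mul_assoc] using (hchord k l).1) 2
  have hE : elementaryDirichletForm F u ≤ t ^ 2 * elementaryDirichletForm F b := by
    rw [hb_eq]
    refine elementaryDirichletForm_conjStarAlgAut_diagonal_le V F fun i j => ?_
    rw [hμ, ← Complex.sq_norm, ← mul_pow]
    exact pow_le_pow_left₀ (norm_nonneg _) (hchord j i).2 2
  have hgap_u := hgap u hu
  rw [one_sub_sq_norm_normalizedTrace_of_mem_unitaryGroup hm hu] at hgap_u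
  refine le_of_mul_le_mul_left ?_ (pow_pos ht 2)
  calc t ^ 2 * ((2 / π) ^ 2 * ε * l2NormSq (b - normalizedTrace b • 1))
      = ε * ((2 / π) ^ 2 * t ^ 2 * l2NormSq (b - normalizedTrace b • 1)) := by ring
    _ ≤ ε * l2NormSq (u - normalizedTrace u • 1) := mul_le_mul_of_nonneg_left hvar hε
    _ ≤ t ^ 2 * elementaryDirichletForm F b := hgap_u.trans hE

end Poincare

section Decomposition

variable {m : ℕ} {F : Finset (Matrix (Fin m) (Fin m) ℂ)}

theorem elementaryDirichletForm_conjTranspose (hF : ∀ x ∈ F, xᴴ ∈ F)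
    (a : Matrix (Fin m) (Fin m) ℂ) :
    elementaryDirichletForm F aᴴ = elementaryDirichletForm F a := by
  simp only [elementaryDirichletForm_eq_sum_l2NormSq]
  refine Finset.sum_nbij' (·ᴴ) (·ᴴ) hF hF (fun x _ => x.conjTranspose_conjTranspose)
    (fun x _ => x.conjTranspose_conjTranspose) fun x _ => ?_
  have h : x * aᴴ - aᴴ * x = -(xᴴ * a - a * xᴴ)ᴴ := by
    rw [conjTranspose_sub, conjTranspose_mul, conjTranspose_mul,
      conjTranspose_conjTranspose, neg_sub]
  rw [h, l2NormSq_neg, l2NormSq_conjTranspose]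

theorem elementaryDirichletForm_add_I_smul (hF : ∀ x ∈ F, xᴴ ∈ F)
    {P Q : Matrix (Fin m) (Fin m) ℂ} (hP : IsSelfAdjoint P) (hQ : IsSelfAdjoint Q) :
    elementaryDirichletForm F (P + I • Q) =
      elementaryDirichletForm F P + elementaryDirichletForm F Q := by
  have hcomm (x : Matrix (Fin m) (Fin m) ℂ) (c : ℂ) :
      x * (P + c • Q) - (P + c • Q) * x = (x * P - P * x) + c • (x * Q - Q * x) := by
    simp only [mul_add, add_mul, mul_smul_comm, smul_mul_assoc]
    module
  have hadj : (P + I • Q)ᴴ = P + (-I) • Q := by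
    rw [conjTranspose_add, conjTranspose_smul, ← star_eq_conjTranspose,
      ← star_eq_conjTranspose, hP.star_eq, hQ.star_eq, Complex.star_def, Complex.conj_I]
  have hpar : elementaryDirichletForm F (P + I • Q) + elementaryDirichletForm F (P + (-I) • Q) =
      2 * elementaryDirichletForm F P + 2 * elementaryDirichletForm F Q := by
    simp only [elementaryDirichletForm_eq_sum_l2NormSq, hcomm, Finset.mul_sum,
      ← Finset.sum_add_distrib]
    refine Finset.sum_congr rfl fun x _ => ?_
    rw [neg_smul, ← sub_eq_add_neg, l2NormSq_add_add_l2NormSq_sub, l2NormSq_smul,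
      Complex.normSq_I, one_mul]
  rw [← hadj, elementaryDirichletForm_conjTranspose hF] at hpar
  linarith

theorem poincare_of_unitary_gap (hm : m ≠ 0) (hF : ∀ x ∈ F, xᴴ ∈ F) {ε : ℝ} (hε : 0 ≤ ε)
    (hgap : ∀ u ∈ unitaryGroup (Fin m) ℂ,
      ε * (1 - ‖normalizedTrace u‖ ^ 2) ≤ elementaryDirichletForm F u)
    (a : Matrix (Fin m) (Fin m) ℂ) :
    (2 / π) ^ 2 * ε * l2NormSq (a - normalizedTrace a • 1) ≤
      elementaryDirichletForm F a := by
  set P : Matrix (Fin m) (Fin m) ℂ := ↑(realPart a)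
  set Q : Matrix (Fin m) (Fin m) ℂ := ↑(imaginaryPart a)
  have hP : IsSelfAdjoint P := (realPart a).2
  have hQ : IsSelfAdjoint Q := (imaginaryPart a).2
  have ha : a = P + I • Q := (realPart_add_I_smul_imaginaryPart a).symm
  have hcentred : a - normalizedTrace a • 1 =
      (P - normalizedTrace P • 1) + I • (Q - normalizedTrace Q • 1) := by
    conv_lhs => rw [ha, normalizedTrace_add, normalizedTrace_smul]
    module
  have hP' := hP.sub (hP.normalizedTrace.smul (IsSelfAdjoint.one _))
  have hQ' := hQ.sub (hQ.normalizedTrace.smul (IsSelfAdjoint.one _))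
  rw [hcentred, l2NormSq_add_I_smul hP' hQ', ha, elementaryDirichletForm_add_I_smul hF hP hQ,
    mul_add]
  exact add_le_add (poincare_of_unitary_gap_of_isSelfAdjoint hm hε hgap hP)
    (poincare_of_unitary_gap_of_isSelfAdjoint hm hε hgap hQ)

end Decomposition

/-- Absence of Property (Γ), expressed as a uniform lower bound
`ε(1 − |τ(u)|²) ≤ E_F(u)` over all unitaries `u`, implies a Poincaré inequality
`(ε/8)‖a − τ(a)1‖₂² ≤ E_F(a)` for the elementary Dirichlet form `E_F`. -/
theorem poincare_of_gap_on_unitaries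
    {m : ℕ} (F : Finset (Matrix (Fin m) (Fin m) ℂ)) (hF : ∀ x ∈ F, xᴴ ∈ F)
    {ε : ℝ} (hε : 0 < ε)
    (hgap : ∀ u : Matrix (Fin m) (Fin m) ℂ, u ∈ Matrix.unitaryGroup (Fin m) ℂ →
      ε * (1 - ‖normalizedTrace u‖ ^ 2) ≤ elementaryDirichletForm F u) :
    ∀ a : Matrix (Fin m) (Fin m) ℂ,
      (ε / 8) * (normalizedTrace ((a - normalizedTrace a • 1)ᴴ *
          (a - normalizedTrace a • 1))).re ≤ elementaryDirichletForm F a := by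
  intro a
  obtain rfl | hm := eq_or_ne m 0
  · simp [elementaryDirichletForm, normalizedTrace]
  have hπ : ε / 8 ≤ (2 / π) ^ 2 * ε := by
    have h : 1 / 8 ≤ (2 / π) ^ 2 := by
      rw [div_pow, le_div_iff₀ (by positivity)]
      nlinarith [Real.pi_le_four, Real.pi_pos]
    linarith [mul_le_mul_of_nonneg_right h hε.le]
  calc ε / 8 * l2NormSq (a - normalizedTrace a • 1)
      ≤ (2 / π) ^ 2 * ε * l2NormSq (a - normalizedTrace a • 1) :=
        mul_le_mul_of_nonneg_right hπ (l2NormSq_nonneg _)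
    _ ≤ elementaryDirichletForm F a := poincare_of_unitary_gap hm hF hε.le hgap a
end
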